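/- The sequence h¹_Ω(A_n) := (n⁵ + 19n⁴ + 83n³ + 137n² + 80n)/(6(n+1)²(n+2)²) − (4/3)·Σ_{k=1}^{n} 1/k² is strictly increasing in n ≥ 1 and tends to +∞ as n → ∞. -/
import Mathlib


open Filter

/-- The 1st cohomological `Ω`-asymptotics `h¹_Ω(A_n)`. -/
noncomputable def h1Omega (n : ℕ) : ℝ :=
  ((n : ℝ) ^ 5 + 19 * (n : ℝ) ^ 4 + 83 * (n : ℝ) ^ 3 + 137 * (n : ℝ) ^ 2 + 80 * n) /
      (6 * ((n : ℝ) + 1) ^ 2 * ((n : ℝ) + 2) ^ 2) -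
    (4 / 3) * ∑ k ∈ Finset.Icc 1 n, (1 : ℝ) / (k : ℝ) ^ 2

lemma sum_sq_le (n : ℕ) : ∑ k ∈ Finset.Icc 1 n, (1 : ℝ) / (k : ℝ) ^ 2 ≤ 2 := by
  have key : ∀ m : ℕ, 1 ≤ m → ∑ k ∈ Finset.Icc 1 m, (1 : ℝ) / (k : ℝ) ^ 2 ≤ 2 - 1 / m := by
    intro m hm
    induction m with
    | zero => omega
    | succ p ih =>
      rcases Nat.eq_or_lt_of_le hm with h | h
      · simp [← h]
        norm_num
      · have hp : 1 ≤ p := by omega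
        rw [Finset.sum_Icc_succ_top (by omega : 1 ≤ p + 1)]
        have hpp : (0:ℝ) < (p : ℝ) := by exact_mod_cast hp
        have := ih hp
        push_cast
        have h1 : (1:ℝ) / ((p:ℝ) + 1) ^ 2 ≤ 1 / p - 1 / (p + 1) := by
          rw [div_sub_div _ _ (ne_of_gt hpp) (by positivity)]
          rw [div_le_div_iff₀ (by positivity) (by positivity)]
          ring_nf
          nlinarith
        push_cast at this
        linarith
  rcases Nat.eq_zero_or_pos n with h | h
  · simp [h]
  · have := key n h
    have hn : (0:ℝ) < (n:ℝ) := by exact_mod_cast h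
    have : (0:ℝ) < 1 / n := by positivity
    linarith [key n h]

lemma h1Omega_ge (n : ℕ) : (n : ℝ) / 6 - 3 ≤ h1Omega n := by
  unfold h1Omega
  have hs := sum_sq_le n
  have hx : (0:ℝ) ≤ (n:ℝ) := Nat.cast_nonneg n
  have hfrac : (n : ℝ) / 6 ≤
      ((n : ℝ) ^ 5 + 19 * (n : ℝ) ^ 4 + 83 * (n : ℝ) ^ 3 + 137 * (n : ℝ) ^ 2 + 80 * n) /
      (6 * ((n : ℝ) + 1) ^ 2 * ((n : ℝ) + 2) ^ 2) := by
    rw [div_le_div_iff₀ (by norm_num) (by positivity)]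
    nlinarith [sq_nonneg ((n:ℝ)), pow_nonneg hx 3, pow_nonneg hx 4, pow_nonneg hx 5]
  linarith

/-- The invariants `h¹_Ω(A_n)` strictly increase with `n` and tend to `+∞`. -/
theorem h1Omega_strictMono_and_tendsto_atTop :
    (∀ n : ℕ, 1 ≤ n → h1Omega n < h1Omega (n + 1)) ∧
      Tendsto h1Omega atTop atTop := by
  constructor
  · intro n hn
    unfold h1Omega
    rw [Finset.sum_Icc_succ_top (by omega : 1 ≤ n + 1)]
    set x : ℝ := (n : ℝ) with hxdef
    have hx : (0:ℝ) ≤ x := Nat.cast_nonneg n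
    push_cast
    have key : (x ^ 5 + 19 * x ^ 4 + 83 * x ^ 3 + 137 * x ^ 2 + 80 * x) /
        (6 * (x + 1) ^ 2 * (x + 2) ^ 2) + (4 / 3) * (1 / (x + 1) ^ 2) <
        ((x+1) ^ 5 + 19 * (x+1) ^ 4 + 83 * (x+1) ^ 3 + 137 * (x+1) ^ 2 + 80 * (x+1)) /
        (6 * ((x+1) + 1) ^ 2 * ((x+1) + 2) ^ 2) := by
      have h1 : (0:ℝ) < (x + 1) ^ 2 := by positivity
      have h2 : (0:ℝ) < (x + 2) ^ 2 := by positivity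
      have h3 : (0:ℝ) < (x + 3) ^ 2 := by positivity
      have hrw : (4:ℝ) / 3 * (1 / (x + 1) ^ 2) = 4 / (3 * (x + 1) ^ 2) := by rw [mul_one_div, div_div]
      rw [hrw, div_add_div _ _ (by positivity) (by positivity),
        div_lt_div_iff₀ (by positivity) (by positivity)]
      ring_nf
      nlinarith [pow_nonneg hx 3, pow_nonneg hx 4, pow_nonneg hx 5, pow_nonneg hx 6,
        sq_nonneg x, mul_nonneg (mul_nonneg hx hx) hx]
    have : ((n:ℝ) + 1) = x + 1 := by rw [hxdef]
    linarith [key]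
  · apply tendsto_atTop_mono h1Omega_ge
    apply Filter.tendsto_atTop_add_const_right
    apply Tendsto.atTop_div_const (by norm_num)
    exact tendsto_natCast_atTop_atTop
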